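/- arXiv:2409.12381 — 2 statements merged into one kernel-verified Lean document; each statement's English description precedes it below -/
import Mathlib

section
/- Let f : ℝᵈ → ℝ be L-smooth (its gradient is L-Lipschitz), and suppose ‖F'(u)‖ ≤ β for all u, where f(u) = ½‖F(u)‖². Define u₊ = u − (JᵀJ + α·Id)⁻¹ ∇f(u) with J = F'(u) and α > 0. Then f(u₊) ≤ f(u) − p(α)‖∇f(u)‖², where p(α) = 1/(β²+α) − L/(2α²). -/
/-!
Put `g = ∇f(u)` and `s = (JᵀJ + α)⁻¹ g`, so that `u₊ = u - s` and the descent lemma gives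
`f(u₊) ≤ f(u) - ⟪g, s⟫ + (L/2)‖s‖²`. Since `g = Jᵀ(J s) + α s`, we have
`⟪g, s⟫ = ‖J s‖² + α‖s‖² ≥ α‖s‖²`, so Cauchy–Schwarz gives `‖s‖ ≤ ‖g‖ / α`; and expanding `‖g‖²`
with `‖Jᵀ‖ = ‖J‖ ≤ β` gives `‖g‖² ≤ (β² + α)⟪g, s⟫`.
-/

open RealInnerProductSpace ContinuousLinearMap Matrix

section Descent

variable {E : Type*} [NormedAddCommGroup E] [InnerProductSpace ℝ E] [CompleteSpace E]
  {f : E → ℝ} {L : ℝ}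

theorem le_add_inner_gradient_add_sq_of_lipschitz_gradient (hf : ∀ x, DifferentiableAt ℝ f x)
    (hL : ∀ x y, ‖gradient f x - gradient f y‖ ≤ L * ‖x - y‖) (x v : E) :
    f (x + v) ≤ f x + ⟪gradient f x, v⟫ + L / 2 * ‖v‖ ^ 2 := by
  set φ : ℝ → ℝ := fun t => f (x + t • v) - t * ⟪gradient f x, v⟫ - L / 2 * t ^ 2 * ‖v‖ ^ 2
  have hφ : ∀ t, HasDerivAt φ
      (⟪gradient f (x + t • v), v⟫ - ⟪gradient f x, v⟫ - L / 2 * (2 * t) * ‖v‖ ^ 2) t := by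
    intro t
    have hline : HasDerivAt (fun t : ℝ => x + t • v) v t := by
      simpa using ((hasDerivAt_id t).smul_const v).const_add x
    have hfline := (hf (x + t • v)).hasGradientAt.hasFDerivAt.comp_hasDerivAt t hline
    refine ((hfline.sub ((hasDerivAt_id t).mul_const ⟪gradient f x, v⟫)).sub
      (((hasDerivAt_pow 2 t).const_mul (L / 2)).mul_const (‖v‖ ^ 2))).congr_deriv ?_
    simp
  have hanti : AntitoneOn φ (Set.Icc 0 1) := by
    refine antitoneOn_of_deriv_nonpos (convex_Icc 0 1)
      (fun t _ => (hφ t).continuousAt.continuousWithinAt)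
      (fun t _ => (hφ t).differentiableAt.differentiableWithinAt) fun t ht => ?_
    rw [interior_Icc] at ht
    rw [(hφ t).deriv, ← inner_sub_left, sub_nonpos]
    calc ⟪gradient f (x + t • v) - gradient f x, v⟫
        ≤ ‖gradient f (x + t • v) - gradient f x‖ * ‖v‖ := real_inner_le_norm _ _
      _ ≤ L * ‖t • v‖ * ‖v‖ := by
          gcongr
          simpa using hL (x + t • v) x
      _ = L / 2 * (2 * t) * ‖v‖ ^ 2 := by
          rw [norm_smul, Real.norm_of_nonneg ht.1.le]; ring
  have h := hanti (Set.left_mem_Icc.2 zero_le_one) (Set.right_mem_Icc.2 zero_le_one) zero_le_one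
  simp only [φ, zero_smul, one_smul, add_zero] at h
  linarith

end Descent

section RegularizedNormalOperator

variable {E F : Type*} [NormedAddCommGroup E] [InnerProductSpace ℝ E] [CompleteSpace E]
  [NormedAddCommGroup F] [InnerProductSpace ℝ F] [CompleteSpace F] (A : E →L[ℝ] F) {α : ℝ} (s : E)

theorem inner_adjoint_apply_add_smul_self :
    ⟪adjoint A (A s) + α • s, s⟫ = ‖A s‖ ^ 2 + α * ‖s‖ ^ 2 := by
  rw [inner_add_left, adjoint_inner_left, real_inner_smul_left, real_inner_self_eq_norm_sq,
    real_inner_self_eq_norm_sq]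

theorem mul_norm_le_norm_adjoint_apply_add_smul :
    α * ‖s‖ ≤ ‖adjoint A (A s) + α • s‖ := by
  rcases (norm_nonneg s).eq_or_lt with hs | hs
  · rw [← hs, mul_zero]; exact norm_nonneg _
  refine le_of_mul_le_mul_right ?_ hs
  calc α * ‖s‖ * ‖s‖ ≤ ‖A s‖ ^ 2 + α * ‖s‖ ^ 2 := by nlinarith [sq_nonneg ‖A s‖]
    _ = ⟪adjoint A (A s) + α • s, s⟫ := (inner_adjoint_apply_add_smul_self A s).symm
    _ ≤ ‖adjoint A (A s) + α • s‖ * ‖s‖ := real_inner_le_norm _ _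

theorem norm_adjoint_apply_add_smul_sq_le {β : ℝ} (hα : 0 ≤ α) (hA : ‖A‖ ≤ β) :
    ‖adjoint A (A s) + α • s‖ ^ 2 ≤ (β ^ 2 + α) * ⟪adjoint A (A s) + α • s, s⟫ := by
  set w := A s
  have hw : ‖w‖ ≤ β * ‖s‖ := A.le_of_opNorm_le hA s
  have hAw : ‖adjoint A w‖ ≤ β * ‖w‖ :=
    (adjoint A).le_of_opNorm_le (by rwa [LinearIsometryEquiv.norm_map]) w
  have hexpand :
      ‖adjoint A w + α • s‖ ^ 2 = ‖adjoint A w‖ ^ 2 + 2 * α * ‖w‖ ^ 2 + α ^ 2 * ‖s‖ ^ 2 := by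
    rw [norm_add_sq_real, real_inner_smul_right, adjoint_inner_left, real_inner_self_eq_norm_sq,
      norm_smul, Real.norm_of_nonneg hα]
    ring
  have hAw2 : ‖adjoint A w‖ ^ 2 ≤ β ^ 2 * ‖w‖ ^ 2 := by
    simpa only [mul_pow] using pow_le_pow_left₀ (norm_nonneg _) hAw 2
  have hw2 : α * ‖w‖ ^ 2 ≤ α * (β ^ 2 * ‖s‖ ^ 2) := by
    gcongr
    simpa only [mul_pow] using pow_le_pow_left₀ (norm_nonneg _) hw 2
  rw [inner_adjoint_apply_add_smul_self, hexpand]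
  linarith

end RegularizedNormalOperator

section MatrixForm

variable {m n : Type*} [Fintype m] [Fintype n] [DecidableEq n]

theorem toEuclideanLin_transpose_mul_self_add_smul_one_apply [DecidableEq m] (J : Matrix m n ℝ)
    (α : ℝ) (s : EuclideanSpace ℝ n) :
    toEuclideanLin (Jᵀ * J + α • 1) s =
      adjoint (toEuclideanLin J).toContinuousLinearMap ((toEuclideanLin J).toContinuousLinearMap s)
        + α • s := by
  rw [← LinearMap.adjoint_toContinuousLinearMap, ← conjTranspose_eq_transpose_of_trivial,
    map_add, toLpLin_mul_same, toEuclideanLin_conjTranspose_eq_adjoint]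
  simp

theorem posDef_transpose_mul_self_add_smul_one (J : Matrix m n ℝ) {α : ℝ} (hα : 0 < α) :
    (Jᵀ * J + α • 1).PosDef := by
  refine PosDef.posSemidef_add ?_ (PosDef.one.smul hα)
  simpa using posSemidef_conjTranspose_mul_self J

theorem toEuclideanLin_apply_toEuclideanLin_inv_apply {M : Matrix n n ℝ} (hM : IsUnit M)
    (v : EuclideanSpace ℝ n) : toEuclideanLin M (toEuclideanLin M⁻¹ v) = v := by
  rw [← LinearMap.comp_apply, ← toLpLin_mul, mul_nonsing_inv _ ((isUnit_iff_isUnit_det M).1 hM),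
    toLpLin_one, LinearMap.id_apply]

end MatrixForm

theorem stmt_4_general {d m : ℕ} (L β α : ℝ) (hL : 0 < L) (hβ : 0 ≤ β) (hα : 0 < α)
    (F : EuclideanSpace ℝ (Fin d) → EuclideanSpace ℝ (Fin m))
    (f : EuclideanSpace ℝ (Fin d) → ℝ)
    (hdiff : ∀ v, DifferentiableAt ℝ f v)
    (hLip : ∀ x y, ‖gradient f x - gradient f y‖ ≤ L * ‖x - y‖)
    (u : EuclideanSpace ℝ (Fin d))
    (J : Matrix (Fin m) (Fin d) ℝ)
    (hJ : HasFDerivAt F (LinearMap.toContinuousLinearMap (Matrix.toEuclideanLin J)) u)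
    (hJβ : ∀ v : EuclideanSpace ℝ (Fin d), ∀ J' : Matrix (Fin m) (Fin d) ℝ,
      HasFDerivAt F (LinearMap.toContinuousLinearMap (Matrix.toEuclideanLin J')) v →
        ∀ w, ‖Matrix.toEuclideanLin J' w‖ ≤ β * ‖w‖)
    (uplus : EuclideanSpace ℝ (Fin d))
    (hup : uplus = u - Matrix.toEuclideanLin
      ((Jᵀ * J + α • (1 : Matrix (Fin d) (Fin d) ℝ))⁻¹) (gradient f u)) :
    f uplus ≤ f u - (1 / (β ^ 2 + α) - L / (2 * α ^ 2)) * ‖gradient f u‖ ^ 2 := by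
  set g := gradient f u
  set T := LinearMap.toContinuousLinearMap (toEuclideanLin J)
  set s := toEuclideanLin (Jᵀ * J + α • 1)⁻¹ g
  have hTs : adjoint T (T s) + α • s = g := by
    rw [← toEuclideanLin_transpose_mul_self_add_smul_one_apply,
      toEuclideanLin_apply_toEuclideanLin_inv_apply
        (posDef_transpose_mul_self_add_smul_one J hα).isUnit]
  have hT : ‖T‖ ≤ β := T.opNorm_le_bound hβ (hJβ u J hJ)
  have hinner : ‖g‖ ^ 2 ≤ (β ^ 2 + α) * ⟪g, s⟫ := by
    simpa only [hTs] using norm_adjoint_apply_add_smul_sq_le T s hα.le hT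
  have hs : ‖s‖ ≤ ‖g‖ / α := by
    rw [le_div_iff₀ hα, mul_comm, ← hTs]
    exact mul_norm_le_norm_adjoint_apply_add_smul T s
  have hdescent := le_add_inner_gradient_add_sq_of_lipschitz_gradient hdiff hLip u (-s)
  rw [← sub_eq_add_neg, ← hup, inner_neg_right, norm_neg] at hdescent
  calc f uplus ≤ f u - ⟪g, s⟫ + L / 2 * ‖s‖ ^ 2 := by linarith
    _ ≤ f u - ‖g‖ ^ 2 / (β ^ 2 + α) + L / 2 * (‖g‖ / α) ^ 2 := by
        gcongr
        exact (div_le_iff₀' (by positivity)).2 hinner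
    _ = f u - (1 / (β ^ 2 + α) - L / (2 * α ^ 2)) * ‖g‖ ^ 2 := by ring

theorem stmt_4 {d m : ℕ} (L β α : ℝ) (hL : 0 < L) (hβ : 0 ≤ β) (hα : 0 < α)
    (F : EuclideanSpace ℝ (Fin d) → EuclideanSpace ℝ (Fin m))
    (f : EuclideanSpace ℝ (Fin d) → ℝ)
    (hf : ∀ v, f v = (1 / 2 : ℝ) * ‖F v‖ ^ 2)
    (hdiff : ∀ v, DifferentiableAt ℝ f v)
    (hLip : ∀ x y, ‖gradient f x - gradient f y‖ ≤ L * ‖x - y‖)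
    (u : EuclideanSpace ℝ (Fin d))
    (J : Matrix (Fin m) (Fin d) ℝ)
    (hJ : HasFDerivAt F (LinearMap.toContinuousLinearMap (Matrix.toEuclideanLin J)) u)
    (hJβ : ∀ v : EuclideanSpace ℝ (Fin d), ∀ J' : Matrix (Fin m) (Fin d) ℝ,
      HasFDerivAt F (LinearMap.toContinuousLinearMap (Matrix.toEuclideanLin J')) v →
        ∀ w, ‖Matrix.toEuclideanLin J' w‖ ≤ β * ‖w‖)
    (uplus : EuclideanSpace ℝ (Fin d))
    (hup : uplus = u - Matrix.toEuclideanLin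
      ((Jᵀ * J + α • (1 : Matrix (Fin d) (Fin d) ℝ))⁻¹) (gradient f u)) :
    f uplus ≤ f u - (1 / (β ^ 2 + α) - L / (2 * α ^ 2)) * ‖gradient f u‖ ^ 2 :=
  stmt_4_general L β α hL hβ hα F f hdiff hLip u J hJ hJβ uplus hup
end

section
/- Let g, p, z be random vectors in a real inner product space with E‖g−p‖² ≤ σ² and ‖p − z‖ ≤ δ almost surely. Then E[(½‖g‖² − ⟨z,g⟩) − (½‖p‖² − ⟨z,p⟩)] ≤ σ²/2 + δσ. -/
open MeasureTheory RealInnerProductSpace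

theorem stmt_7 {Ω : Type*} [MeasurableSpace Ω] (μ : Measure Ω) [IsProbabilityMeasure μ]
    {H : Type*} [NormedAddCommGroup H] [InnerProductSpace ℝ H]
    (g p z : Ω → H) (σ δ : ℝ) (hσ : 0 ≤ σ) (hδ : 0 ≤ δ)
    (h1 : ∫ ω, ‖g ω - p ω‖ ∂μ ≤ σ)
    (h2 : ∫ ω, ‖g ω - p ω‖ ^ 2 ∂μ ≤ σ ^ 2)
    (h3 : ∀ᵐ ω ∂μ, ‖p ω - z ω‖ ≤ δ)
    (hint : Integrable (fun ω =>
      ((1 / 2 : ℝ) * ‖g ω‖ ^ 2 - ⟪z ω, g ω⟫) -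
        ((1 / 2 : ℝ) * ‖p ω‖ ^ 2 - ⟪z ω, p ω⟫)) μ)
    (hint1 : Integrable (fun ω => ‖g ω - p ω‖) μ)
    (hint2 : Integrable (fun ω => ‖g ω - p ω‖ ^ 2) μ) :
    ∫ ω, (((1 / 2 : ℝ) * ‖g ω‖ ^ 2 - ⟪z ω, g ω⟫) -
        ((1 / 2 : ℝ) * ‖p ω‖ ^ 2 - ⟪z ω, p ω⟫)) ∂μ ≤ σ ^ 2 / 2 + δ * σ := by
  have key : ∀ᵐ ω ∂μ, (((1 / 2 : ℝ) * ‖g ω‖ ^ 2 - ⟪z ω, g ω⟫) -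
        ((1 / 2 : ℝ) * ‖p ω‖ ^ 2 - ⟪z ω, p ω⟫)) ≤
      (1 / 2 : ℝ) * ‖g ω - p ω‖ ^ 2 + δ * ‖g ω - p ω‖ := by
    filter_upwards [h3] with ω hω
    have hid : ((1 / 2 : ℝ) * ‖g ω‖ ^ 2 - ⟪z ω, g ω⟫) -
        ((1 / 2 : ℝ) * ‖p ω‖ ^ 2 - ⟪z ω, p ω⟫) =
        (1 / 2 : ℝ) * ‖g ω - p ω‖ ^ 2 + ⟪p ω - z ω, g ω - p ω⟫ := by
      simp only [norm_sub_sq_real, inner_sub_left, inner_sub_right,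
        real_inner_self_eq_norm_sq, real_inner_comm (p ω) (g ω)]
      ring
    rw [hid]
    gcongr
    calc ⟪p ω - z ω, g ω - p ω⟫ ≤ ‖p ω - z ω‖ * ‖g ω - p ω‖ :=
          real_inner_le_norm _ _
      _ ≤ δ * ‖g ω - p ω‖ := by
          exact mul_le_mul_of_nonneg_right hω (norm_nonneg _)
  have hintc : Integrable (fun ω => (1 / 2 : ℝ) * ‖g ω - p ω‖ ^ 2 + δ * ‖g ω - p ω‖) μ :=
    (hint2.const_mul _).add (hint1.const_mul _)
  calc ∫ ω, (((1 / 2 : ℝ) * ‖g ω‖ ^ 2 - ⟪z ω, g ω⟫) -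
        ((1 / 2 : ℝ) * ‖p ω‖ ^ 2 - ⟪z ω, p ω⟫)) ∂μ
      ≤ ∫ ω, ((1 / 2 : ℝ) * ‖g ω - p ω‖ ^ 2 + δ * ‖g ω - p ω‖) ∂μ :=
        integral_mono_ae hint hintc key
    _ = (1 / 2 : ℝ) * ∫ ω, ‖g ω - p ω‖ ^ 2 ∂μ + δ * ∫ ω, ‖g ω - p ω‖ ∂μ := by
        rw [integral_add (hint2.const_mul _) (hint1.const_mul _),
          integral_const_mul, integral_const_mul]
    _ ≤ (1 / 2 : ℝ) * σ ^ 2 + δ * σ := by gcongr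
    _ = σ ^ 2 / 2 + δ * σ := by ring
end
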